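/- arXiv:1608.03538 — 5 statements merged into one kernel-verified Lean document; each statement's English description precedes it below -/
import Mathlib

section
/- Let a₁, a₂ be integers with 2 ≤ a₁ ≤ a₂ satisfying a₁·a₂ − a₁ − a₂ = gcd(a₁, a₂). Then (a₁, a₂) ∈ {(2,3), (2,4), (3,3)}; in particular a₁·a₂ − a₁ − a₂ = gcd(a₁,a₂) with a₁, a₂ ≥ 2 has exactly the solutions {a₁,a₂} = {2,3}, {2,4}, and {3,3}. -/
/-! Since `gcd(a₁, a₂) ≤ a₁`, the equation gives `(a₁ - 1) a₂ ≤ 2 a₁`, hence `a₂ ≤ 4` as soon as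
`a₁ ≥ 2`; the finitely many remaining pairs are checked directly. -/

theorem le_four_of_mul_sub_sub_le {a b : ℤ} (ha : 2 ≤ a) (h : a * b - a - b ≤ a) : b ≤ 4 := by
  nlinarith

theorem stmt_1 (a₁ a₂ : ℤ) (h1 : 2 ≤ a₁) (h12 : a₁ ≤ a₂)
    (h : a₁ * a₂ - a₁ - a₂ = Int.gcd a₁ a₂) :
    (a₁ = 2 ∧ a₂ = 3) ∨ (a₁ = 2 ∧ a₂ = 4) ∨ (a₁ = 3 ∧ a₂ = 3) := by
  have hgcd : (Int.gcd a₁ a₂ : ℤ) ≤ a₁ := Int.le_of_dvd (by omega) (Int.gcd_dvd_left a₁ a₂)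
  have ha₂ : a₂ ≤ 4 := le_four_of_mul_sub_sub_le h1 (h ▸ hgcd)
  have ha₁ : a₁ ≤ 4 := h12.trans ha₂
  interval_cases a₁ <;> interval_cases a₂ <;> simp_all [Int.gcd]
end

section
/- Let s₁, s₂, g₁, g₂, g₃ be positive integers and m = lcm(g₁, g₂, g₃). Assume s₁ divides g₁ and g₂, s₂ divides g₂ and g₃, g₁ ≥ 2s₁, g₂ ≥ 2s₁, g₂ ≥ 2s₂, g₃ ≥ 2s₂, and m/s₁ + m/s₂ − m/g₁ − m/g₂ − m/g₃ = 1. Then g₁ = g₂ = g₃ = m = 2s₁ = 2s₂. -/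
theorem stmt_4 (s₁ s₂ g₁ g₂ g₃ m : ℕ)
    (hs₁ : 0 < s₁) (hs₂ : 0 < s₂) (hg₁ : 0 < g₁) (hg₂ : 0 < g₂) (hg₃ : 0 < g₃)
    (hm : m = Nat.lcm g₁ (Nat.lcm g₂ g₃))
    (hd₁ : s₁ ∣ g₁) (hd₂ : s₁ ∣ g₂) (hd₃ : s₂ ∣ g₂) (hd₄ : s₂ ∣ g₃)
    (hn₁ : 2 * s₁ ≤ g₁) (hn₂ : 2 * s₁ ≤ g₂) (hn₃ : 2 * s₂ ≤ g₂) (hn₄ : 2 * s₂ ≤ g₃)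
    (heq : m / s₁ + m / s₂ = m / g₁ + m / g₂ + m / g₃ + 1) :
    g₁ = m ∧ g₂ = m ∧ g₃ = m ∧ m = 2 * s₁ ∧ m = 2 * s₂ := by
  have hg1m : g₁ ∣ m := hm ▸ Nat.dvd_lcm_left _ _
  have hg2m : g₂ ∣ m := hm ▸ dvd_trans (Nat.dvd_lcm_left _ _) (Nat.dvd_lcm_right _ _)
  have hg3m : g₃ ∣ m := hm ▸ dvd_trans (Nat.dvd_lcm_right _ _) (Nat.dvd_lcm_right _ _)
  have hs1m : s₁ ∣ m := hd₁.trans hg1m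
  have hs2m : s₂ ∣ m := hd₄.trans hg3m
  have hm0 : 0 < m := hm ▸ Nat.pos_of_ne_zero (by
    simp [Nat.lcm_ne_zero, hg₁.ne', hg₂.ne', hg₃.ne'])
  set a := m / s₁ with ha
  set b := m / s₂ with hb
  set x := m / g₁ with hx
  set y := m / g₂ with hy
  set z := m / g₃ with hz
  have ea : s₁ * a = m := Nat.mul_div_cancel' hs1m
  have eb : s₂ * b = m := Nat.mul_div_cancel' hs2m
  have ex : g₁ * x = m := Nat.mul_div_cancel' hg1m
  have ey : g₂ * y = m := Nat.mul_div_cancel' hg2m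
  have ez : g₃ * z = m := Nat.mul_div_cancel' hg3m
  have hx0 : 0 < x := by
    rcases Nat.eq_zero_or_pos x with h | h
    · rw [h, Nat.mul_zero] at ex; omega
    · exact h
  have hy0 : 0 < y := by
    rcases Nat.eq_zero_or_pos y with h | h
    · rw [h, Nat.mul_zero] at ey; omega
    · exact h
  have hz0 : 0 < z := by
    rcases Nat.eq_zero_or_pos z with h | h
    · rw [h, Nat.mul_zero] at ez; omega
    · exact h
  have key : ∀ s g u v : ℕ, 0 < s → 2 * s ≤ g → s * u = m → g * v = m → 2 * v ≤ u := by
    intro s g u v hs hle eu ev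
    have h : s * (2 * v) ≤ s * u := by
      calc s * (2 * v) = (2 * s) * v := by ring
        _ ≤ g * v := Nat.mul_le_mul_right _ hle
        _ = m := ev
        _ = s * u := eu.symm
    exact Nat.le_of_mul_le_mul_left h hs
  have hax : 2 * x ≤ a := key s₁ g₁ a x hs₁ hn₁ ea ex
  have hay : 2 * y ≤ a := key s₁ g₂ a y hs₁ hn₂ ea ey
  have hby : 2 * y ≤ b := key s₂ g₂ b y hs₂ hn₃ eb ey
  have hbz : 2 * z ≤ b := key s₂ g₃ b z hs₂ hn₄ eb ez
  have hx1 : x = 1 ∧ y = 1 ∧ z = 1 ∧ a = 2 ∧ b = 2 := by omega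
  obtain ⟨hx1, hy1, hz1, ha2, hb2⟩ := hx1
  rw [hx1, Nat.mul_one] at ex
  rw [hy1, Nat.mul_one] at ey
  rw [hz1, Nat.mul_one] at ez
  rw [ha2] at ea
  rw [hb2] at eb
  exact ⟨ex, ey, ez, by omega, by omega⟩
end

section
/- Let m ≥ 2 and let f : ℕ → ℕ (indexed from 1) satisfy f(1) ≥ m²/2 ≥ m and the recurrence f(λ+1) = (λ+1)·m·f(λ) + ∑_{μ=1}^{λ−1} f(μ)·f(λ−μ) for all λ ≥ 1. Then f(λ+1) − f(λ) ≥ m·(λ+1)! for all λ ≥ 1. -/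
theorem stmt_9 (m : ℕ) (hm : 2 ≤ m) (f : ℕ → ℕ)
    (h1 : m ^ 2 ≤ 2 * f 1)
    (hrec : ∀ l, 1 ≤ l →
      f (l + 1) = (l + 1) * m * f l + ∑ μ ∈ Finset.Icc 1 (l - 1), f μ * f (l - μ)) :
    ∀ l, 1 ≤ l → f l + m * Nat.factorial (l + 1) ≤ f (l + 1) := by
  have hf : ∀ l, 1 ≤ l → m * Nat.factorial l ≤ f l := by
    intro l hl
    induction l with
    | zero => omega
    | succ n ih =>
      rcases Nat.lt_or_ge n 1 with h | hn
      · have hn0 : n = 0 := by omega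
        subst hn0
        simp [Nat.factorial]
        nlinarith
      · have hfn := ih hn
        have hr := hrec n hn
        have hle : (n + 1) * m * f n ≤ f (n + 1) := by omega
        have hfac : Nat.factorial (n + 1) = (n + 1) * Nat.factorial n := rfl
        calc m * Nat.factorial (n + 1) = (n + 1) * 1 * (m * Nat.factorial n) := by
              rw [hfac]; ring
          _ ≤ (n + 1) * m * (m * Nat.factorial n) := by
              apply Nat.mul_le_mul _ le_rfl
              exact Nat.mul_le_mul le_rfl (by omega)
          _ ≤ (n + 1) * m * f n := Nat.mul_le_mul le_rfl hfn
          _ ≤ f (n + 1) := hle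
  intro l hl
  have hfl := hf l hl
  have hr := hrec l hl
  have hle : (l + 1) * m * f l ≤ f (l + 1) := by omega
  have hfac : Nat.factorial (l + 1) = (l + 1) * Nat.factorial l := rfl
  have key : f l + m * Nat.factorial (l + 1) ≤ (l + 1) * m * f l := by
    rw [hfac]
    obtain ⟨k, rfl⟩ : ∃ k, m = k + 2 := ⟨m - 2, by omega⟩
    have h2 : (k + 2) * (l + 1) ≤ (l * k + 2 * l + k + 1) * (k + 2) := by
      have h : l + 1 ≤ l * k + 2 * l + k + 1 := by linarith [Nat.zero_le (l * k)]
      calc (k + 2) * (l + 1) = (l + 1) * (k + 2) := by ring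
        _ ≤ (l * k + 2 * l + k + 1) * (k + 2) := Nat.mul_le_mul_right _ h
    nlinarith [hfl, Nat.factorial_pos l,
      Nat.mul_le_mul_left (l * k + 2 * l + k + 1) hfl,
      Nat.mul_le_mul_right (Nat.factorial l) h2]
  omega
end

section
/- Let f : ℕ → ℕ (indexed from 1) be a sequence such that f(1) is odd and for all λ ≥ 1: f(λ+1) ≡ f(λ/2) (mod 2) if λ is even, and f(λ+1) ≡ 0 (mod 2) if λ is odd. Then f(λ) is odd if and only if λ = 2^k − 1 for some integer k ≥ 1. -/
theorem stmt_10 (f : ℕ → ℕ) (h1 : Odd (f 1))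
    (heven : ∀ l, 1 ≤ l → Even l → f (l + 1) % 2 = f (l / 2) % 2)
    (hodd : ∀ l, 1 ≤ l → Odd l → f (l + 1) % 2 = 0) :
    ∀ l, 1 ≤ l → (Odd (f l) ↔ ∃ k, 1 ≤ k ∧ l = 2 ^ k - 1) := by
  intro l
  induction l using Nat.strong_induction_on with
  | _ l ih =>
    intro hl
    obtain ⟨m, rfl⟩ : ∃ m, l = m + 1 := ⟨l - 1, by omega⟩
    rcases Nat.eq_zero_or_pos m with rfl | hm
    · exact ⟨fun _ => ⟨1, le_refl 1, rfl⟩, fun _ => h1⟩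
    · rcases Nat.even_or_odd m with he | ho
      · have h := heven m hm he
        have hm2 : 2 ≤ m := by rcases he with ⟨c, hc⟩; omega
        have ihm := ih (m / 2) (by omega) (by omega)
        constructor
        · intro hf
          rw [Nat.odd_iff] at hf
          have hf2 : Odd (f (m / 2)) := by rw [Nat.odd_iff]; omega
          obtain ⟨k, hk, hkeq⟩ := ihm.mp hf2
          refine ⟨k + 1, by omega, ?_⟩
          have h2k : 2 ≤ 2 ^ k := Nat.one_lt_two_pow_iff.mpr (by omega)
          have hp : (2:ℕ) ^ (k + 1) = 2 * 2 ^ k := by ring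
          rcases he with ⟨c, hc⟩
          omega
        · rintro ⟨k, hk, hkeq⟩
          obtain ⟨j, rfl⟩ : ∃ j, k = j + 1 := ⟨k - 1, by omega⟩
          rcases j with _ | i
          · simp at hkeq; omega
          · have hp : (2:ℕ) ^ (i + 1 + 1) = 2 * 2 ^ (i + 1) := by ring
            have h2k : 2 ≤ 2 ^ (i + 1) := Nat.one_lt_two_pow_iff.mpr (by omega)
            have hf2 : Odd (f (m / 2)) :=
              ihm.mpr ⟨i + 1, by omega, by omega⟩
            rw [Nat.odd_iff] at hf2 ⊢
            omega
      · have h := hodd m hm ho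
        rw [Nat.odd_iff] at ho
        constructor
        · intro hf; rw [Nat.odd_iff] at hf; omega
        · rintro ⟨k, hk, hkeq⟩
          have h2k : 2 ≤ 2 ^ k := Nat.one_lt_two_pow_iff.mpr (by omega)
          obtain ⟨c, hc⟩ : 2 ∣ 2 ^ k := dvd_pow_self 2 (by omega)
          exfalso; omega
end

section
/- Let T be a finite tree with at least 2 vertices, rooted at a vertex v₀, and let a : V(T) → ℚ_{>0} and b : E → ℚ_{>0} assign positive rational weights to vertices and to geometric edges. Suppose m ∈ ℚ_{>0} satisfies a(v) ≤ m for all vertices v, and suppose for each geometric edge e with endpoints u, w that 2·b(e) ≤ a(u) and 2·b(e) ≤ a(w), and moreover a(w)/b(e) ∈ ℤ for the endpoint w farther from v₀. Then ∑_{v ∈ V(T)} 1/a(v) − ∑_{e ∈ E} 1/b(e) ≤ −(|E| − 1)/m, where |E| is the number of geometric edges. -/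
/-!
Send each vertex `v ≠ v₀` to an edge joining it to a neighbour strictly closer to `v₀`. This map
is injective (two vertices sharing such an edge would each be closer to `v₀` than the other), so
in a tree, where both sides have `|V| - 1` elements, it is a bijection onto the edges. Pairing
`1 / a v` with `-1 / b` of that edge, the bound `2 b ≤ a v ≤ m` makes each pair at most `-1 / m`.
For a neighbour `v₁` of `v₀` the edge is `v₁v₀`, and `2 b ≤ a v₀, a v₁` absorbs the unpaired
root term: `1 / a v₀ + 1 / a v₁ ≤ 1 / b`.
-/

open Finset

namespace SimpleGraph

variable {V : Type*} {G : SimpleGraph V}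

lemma Reachable.exists_adj_dist_lt {v₀ v : V} (h : G.Reachable v₀ v) (hv : v ≠ v₀) :
    ∃ u, G.Adj v u ∧ G.dist v₀ u < G.dist v₀ v := by
  obtain ⟨p, hp⟩ := h.symm.exists_walk_length_eq_dist
  have hp_not_nil : ¬ p.Nil := Walk.not_nil_of_ne hv
  refine ⟨p.snd, p.adj_snd hp_not_nil, ?_⟩
  have htail := Walk.length_tail_add_one hp_not_nil
  have hle := dist_le p.tail
  rw [dist_comm, @dist_comm _ _ v₀]
  omega

namespace Connected

variable (hG : G.Connected) (v₀ : V)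

noncomputable def parent (v : {v // v ≠ v₀}) : V :=
  ((hG v₀ v).exists_adj_dist_lt v.2).choose

lemma adj_parent (v : {v // v ≠ v₀}) : G.Adj v (hG.parent v₀ v) :=
  ((hG v₀ v).exists_adj_dist_lt v.2).choose_spec.1

lemma dist_parent_lt (v : {v // v ≠ v₀}) : G.dist v₀ (hG.parent v₀ v) < G.dist v₀ v :=
  ((hG v₀ v).exists_adj_dist_lt v.2).choose_spec.2

lemma parent_eq_of_adj {v : V} (h : G.Adj v₀ v) : hG.parent v₀ ⟨v, h.ne'⟩ = v₀ := by
  have := hG.dist_parent_lt v₀ ⟨v, h.ne'⟩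
  rw [dist_eq_one_iff_adj.2 h, Nat.lt_one_iff, Reachable.dist_eq_zero_iff (hG _ _)] at this
  exact this.symm

noncomputable def parentEdge (v : {v // v ≠ v₀}) : G.edgeSet :=
  ⟨s(v, hG.parent v₀ v), hG.adj_parent v₀ v⟩

lemma parentEdge_injective : Function.Injective (hG.parentEdge v₀) := by
  intro v w h
  rcases Sym2.eq_iff.1 (congrArg Subtype.val h) with ⟨hvw, -⟩ | ⟨hv, hw⟩
  · exact Subtype.ext hvw
  · have hv_lt := hG.dist_parent_lt v₀ v
    have hw_lt := hG.dist_parent_lt v₀ w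
    rw [hw] at hv_lt
    rw [← hv] at hw_lt
    omega

end Connected

lemma IsTree.parentEdge_bijective [Fintype V] [Fintype G.edgeSet] (hG : G.IsTree) (v₀ : V) :
    Function.Bijective (hG.connected.parentEdge v₀) := by
  classical
  refine (Fintype.bijective_iff_injective_and_card _).2 ⟨hG.connected.parentEdge_injective v₀, ?_⟩
  have hV := Fintype.card_congr (Equiv.optionSubtypeNe v₀)
  have hE := hG.card_edgeFinset
  rw [Fintype.card_option] at hV
  rw [edgeFinset_card] at hE
  omega

lemma IsTree.sum_sub_sum_eq [Fintype V] [DecidableEq V] [Fintype G.edgeSet] {M : Type*}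
    [AddCommGroup M] (hG : G.IsTree) (v₀ : V) (f : V → M) (g : G.edgeSet → M) :
    ∑ v, f v - ∑ e, g e =
      f v₀ + ∑ v : {v // v ≠ v₀}, (f v - g (hG.connected.parentEdge v₀ v)) := by
  rw [Fintype.sum_eq_add_sum_subtype_ne f v₀, sum_sub_distrib,
    Fintype.sum_bijective _ (hG.parentEdge_bijective v₀) _ g fun _ => rfl, add_sub_assoc]

end SimpleGraph

section

variable {K : Type*} [Field K] [LinearOrder K] [IsStrictOrderedRing K] {a a' b m : K}

lemma one_div_sub_one_div_le_neg_one_div (ha : 0 < a) (ham : a ≤ m) (hb : 0 < b)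
    (hab : 2 * b ≤ a) : 1 / a - 1 / b ≤ -(1 / m) := by
  have hm : 1 / m ≤ 1 / a := one_div_le_one_div_of_le ha ham
  have h2 : 2 / a ≤ 1 / b := by
    rw [div_le_div_iff₀ ha hb]
    linarith
  linarith [show 2 / a = 1 / a + 1 / a by ring]

lemma one_div_add_one_div_le_one_div (hb : 0 < b) (hab : 2 * b ≤ a) (ha'b : 2 * b ≤ a') :
    1 / a + 1 / a' ≤ 1 / b := by
  have h2b : 0 < 2 * b := by positivity
  have h := add_le_add (one_div_le_one_div_of_le h2b hab) (one_div_le_one_div_of_le h2b ha'b)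
  rwa [← add_div, one_add_one_eq_two, div_mul_cancel_left₀ two_ne_zero, ← one_div] at h

end

theorem stmt_12_general {V : Type*} [Fintype V] (G : SimpleGraph V) (hG : G.IsTree)
    (hV : 2 ≤ Fintype.card V) (v₀ : V) [Fintype G.edgeSet]
    (a : V → ℚ) (b : G.edgeSet → ℚ) (m : ℚ)
    (ha : ∀ v, 0 < a v) (hb : ∀ e, 0 < b e)
    (ham : ∀ v, a v ≤ m)
    (hedge : ∀ (e : G.edgeSet) (u w : V), (e : Sym2 V) = s(u, w) →
      2 * b e ≤ a u ∧ 2 * b e ≤ a w ∧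
        (G.dist v₀ u < G.dist v₀ w → ∃ z : ℤ, a w / b e = (z : ℚ))) :
    (∑ v, 1 / a v) - (∑ e : G.edgeSet, 1 / b e)
      ≤ -(((Fintype.card G.edgeSet : ℚ) - 1) / m) := by
  classical
  have : Nontrivial V := Fintype.one_lt_card_iff_nontrivial.1 hV
  obtain ⟨v₁, h₀₁⟩ := hG.connected.preconnected.exists_adj_of_nontrivial v₀
  set v₁' : {v // v ≠ v₀} := ⟨v₁, h₀₁.ne'⟩
  rw [hG.sum_sub_sum_eq v₀, Fintype.sum_eq_add_sum_subtype_ne _ v₁']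
  set e := hG.connected.parentEdge v₀
  have hterm (v : {v // v ≠ v₀}) : 1 / a v - 1 / b (e v) ≤ -(1 / m) := by
    obtain ⟨-, hav, -⟩ := hedge (e v) (hG.connected.parent v₀ v) v Sym2.eq_swap
    exact one_div_sub_one_div_le_neg_one_div (ha v) (ham v) (hb _) hav
  have hroot : 1 / a v₀ + (1 / a v₁' - 1 / b (e v₁')) ≤ 0 := by
    have he : (e v₁' : Sym2 V) = s(v₁, v₀) := by
      simp only [e, v₁', SimpleGraph.Connected.parentEdge, hG.connected.parent_eq_of_adj v₀ h₀₁]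
    obtain ⟨hav₁, hav₀, -⟩ := hedge _ v₁ v₀ he
    linarith [one_div_add_one_div_le_one_div (hb _) hav₀ hav₁]
  have hrest := sum_le_card_nsmul univ (fun v : {v // v ≠ v₁'} => 1 / a v - 1 / b (e v))
    _ fun v _ => hterm v
  have hcard : Fintype.card {v // v ≠ v₁'} + 1 = Fintype.card G.edgeSet := by
    rw [← Fintype.card_of_bijective (hG.parentEdge_bijective v₀), ← Fintype.card_option,
      Fintype.card_congr (Equiv.optionSubtypeNe v₁')]
  rw [card_univ, nsmul_eq_mul] at hrest
  push_cast [← hcard, add_sub_cancel_right]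
  linarith [mul_one_div (Fintype.card {v // v ≠ v₁'} : ℚ) m]

theorem stmt_12 {V : Type*} [Fintype V] (G : SimpleGraph V) (hG : G.IsTree)
    (hV : 2 ≤ Fintype.card V) (v₀ : V) [Fintype G.edgeSet]
    (a : V → ℚ) (b : G.edgeSet → ℚ) (m : ℚ) (hm : 0 < m)
    (ha : ∀ v, 0 < a v) (hb : ∀ e, 0 < b e)
    (ham : ∀ v, a v ≤ m)
    (hedge : ∀ (e : G.edgeSet) (u w : V), (e : Sym2 V) = s(u, w) →
      2 * b e ≤ a u ∧ 2 * b e ≤ a w ∧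
        (G.dist v₀ u < G.dist v₀ w → ∃ z : ℤ, a w / b e = (z : ℚ))) :
    (∑ v, 1 / a v) - (∑ e : G.edgeSet, 1 / b e)
      ≤ -(((Fintype.card G.edgeSet : ℚ) - 1) / m) :=
  stmt_12_general G hG hV v₀ a b m ha hb ham hedge
end
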